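/- arXiv:2203.00009 — 5 statements merged into one kernel-verified Lean document; each statement's English description precedes it below -/
import Mathlib

section
/- Let n ≥ 2, Λ = (λ₁,…,λ_n) ∈ ℝⁿ and |Λ| = λ₁+⋯+λ_n. Let F be a smooth function on (0,∞)ⁿ and define g = F ∘ θ_n on (0,∞) × D_{n−1}. Then for every t > 0 and v ∈ D_{n−1}: (𝓑_Λ F)(θ_n(t,v)) = t·∂²g/∂t²(t,v) + |Λ|·∂g/∂t(t,v) + (1/t)·[ Σ_{i=1}^{n−1} v_i(1−v_i)·∂²g/∂v_i²(t,v) − 2 Σ_{1≤i<j≤n−1} v_i v_j·∂²g/∂v_i∂v_j(t,v) + Σ_{i=1}^{n−1} (λ_i − |Λ| v_i)·∂g/∂v_i(t,v) ]. -/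
open MeasureTheory Finset

noncomputable section

/-- Sum of the first `m` coordinates of `x`. -/
def psum {n : ℕ} (x : Fin n → ℝ) (m : ℕ) : ℝ :=
  ∑ j : Fin n, if (j : ℕ) < m then x j else 0

/-- The open simplex `D_n`. -/
def simplexD (n : ℕ) : Set (Fin n → ℝ) := {x | (∀ i, 0 < x i) ∧ psum x n < 1}

/-- Partial derivative in the `i`-th coordinate direction. -/
def pderiv1 {m : ℕ} (i : Fin m) (F : (Fin m → ℝ) → ℝ) : (Fin m → ℝ) → ℝ :=
  fun x => fderiv ℝ F x (Pi.single i 1)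

/-- The stratification map `θ_n(t,v) = (tv₁, …, tv_{n-1}, t(1-|v|))`. -/
def strTheta (n : ℕ) (t : ℝ) (v : Fin (n - 1) → ℝ) : Fin n → ℝ :=
  fun j => if h : (j : ℕ) < n - 1 then t * v ⟨j, h⟩ else t * (1 - ∑ i, v i)

/-- The Bessel operator `𝓑_Λ F(x) = Σᵢ (xᵢ ∂²F/∂xᵢ² + λᵢ ∂F/∂xᵢ)`. -/
def besselOp {n : ℕ} (Λ : Fin n → ℝ) (F : (Fin n → ℝ) → ℝ) (x : Fin n → ℝ) : ℝ :=
  ∑ i : Fin n, (x i * pderiv1 i (pderiv1 i F) x + Λ i * pderiv1 i F x)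

/-!
For `n = m + 1` we have `θₙ(t, v) = t • c(v)`, where `c(v) = eₙ + ∑ᵢ vᵢ (eᵢ - eₙ)` is the affine
chart of the standard simplex. With `L = DF(θₙ(t, v))`, `B = D²F(θₙ(t, v))` and `uᵢ = eᵢ - eₙ`, the
chain rule gives `∂ₜg = L c`, `∂ₜ²g = B(c, c)`, `∂ᵥᵢg = t L uᵢ` and `∂ᵥᵢ∂ᵥⱼg = t² B(uᵢ, uⱼ)`, while
`𝓑_Λ F(θₙ(t, v)) = t ∑ₖ cₖ B(eₖ, eₖ) + ∑ₖ λₖ L eₖ`. What remains is to expand these two sums in the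
basis `c, u₁, …, uₘ`; in the quadratic one, the symmetry of `B` merges the terms `B(uᵢ, uⱼ)` and
`B(uⱼ, uᵢ)` into `2 B(uᵢ, uⱼ)`.
-/

section Calculus

variable {𝕜 : Type*} [NontriviallyNormedField 𝕜]
  {E : Type*} [NormedAddCommGroup E] [NormedSpace 𝕜 E]
  {E' : Type*} [NormedAddCommGroup E'] [NormedSpace 𝕜 E']
  {G : Type*} [NormedAddCommGroup G] [NormedSpace 𝕜 G]

theorem fderiv_fderiv_apply_apply {f : E → G} {x : E}
    (hf : DifferentiableAt 𝕜 (fderiv 𝕜 f) x) (h k : E) :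
    fderiv 𝕜 (fun y => fderiv 𝕜 f y k) x h = fderiv 𝕜 (fderiv 𝕜 f) x h k := by
  rw [fderiv_clm_apply hf (differentiableAt_const k)]
  simp

variable {A : E' → E} {T : E' →L[𝕜] E}

theorem fderiv_comp_of_hasFDerivAt {f : E → G} {w : E'} (hA : HasFDerivAt A T w)
    (hf : DifferentiableAt 𝕜 f (A w)) :
    fderiv 𝕜 (fun w => f (A w)) w = (fderiv 𝕜 f (A w)).comp T :=
  (hf.hasFDerivAt.comp w hA).fderiv

theorem fderiv_fderiv_comp_apply_apply_of_hasFDerivAt (hA : ∀ w, HasFDerivAt A T w)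
    {f : E → G} {v : E'} (hf : ContDiffAt 𝕜 2 f (A v)) (h k : E') :
    fderiv 𝕜 (fun w => fderiv 𝕜 (fun w => f (A w)) w k) v h
      = fderiv 𝕜 (fderiv 𝕜 f) (A v) (T h) (T k) := by
  have hf₁ : ∀ᶠ w in nhds v, DifferentiableAt 𝕜 f (A w) :=
    (hA v).continuousAt.eventually
      ((hf.eventually (by simp)).mono fun y hy => hy.differentiableAt (by simp))
  have hf₂ : DifferentiableAt 𝕜 (fderiv 𝕜 f) (A v) :=
    (hf.fderiv_right (m := 1) le_rfl).differentiableAt one_ne_zero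
  have hderiv : (fun w => fderiv 𝕜 (fun w => f (A w)) w k) =ᶠ[nhds v]
      fun w => fderiv 𝕜 f (A w) (T k) :=
    hf₁.mono fun w hw => by simp [fderiv_comp_of_hasFDerivAt (hA w) hw]
  rw [hderiv.fderiv_eq, fderiv_comp_of_hasFDerivAt (hA v)
    (hf₂.clm_apply (differentiableAt_const (T k))), ContinuousLinearMap.comp_apply,
    fderiv_fderiv_apply_apply hf₂]

end Calculus

theorem two_mul_sum_sum_ite_lt {ι R : Type*} [Fintype ι] [LinearOrder ι] [CommRing R]
    (f : ι → ι → R) (hf : ∀ i j, f i j = f j i) :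
    2 * ∑ i, ∑ j, (if i < j then f i j else 0) = ∑ i, ∑ j, f i j - ∑ i, f i i := by
  have hsplit : ∀ i j, f i j = (if i < j then f i j else 0) + (if j < i then f j i else 0)
      + (if i = j then f i j else 0) := by
    intro i j
    rcases lt_trichotomy i j with h | rfl | h
    · simp [h, h.not_gt, h.ne]
    · simp
    · simp [h, h.not_gt, h.ne', hf i j]
  have hdiag : ∑ i, f i i = ∑ i, ∑ j, (if i = j then f i j else 0) := by simp
  rw [hdiag, Finset.sum_congr rfl fun i _ => Finset.sum_congr rfl fun j _ => hsplit i j]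
  simp only [Finset.sum_add_distrib]
  rw [Finset.sum_comm (f := fun i j => if j < i then f j i else 0)]
  ring

theorem sum_smulRight_proj_single {𝕜 E ι : Type*} [NontriviallyNormedField 𝕜]
    [NormedAddCommGroup E] [NormedSpace 𝕜 E] [Fintype ι] [DecidableEq ι] (f : ι → E) (j : ι) :
    (∑ i, (ContinuousLinearMap.proj (R := 𝕜) (φ := fun _ => 𝕜) i).smulRight (f i))
      (Pi.single j 1) = f j := by
  simp [Pi.single_apply]

section SimplexChart

variable {R M : Type*} [CommRing R] [AddCommGroup M] [Module R M] {m : ℕ}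

def simplexChart (e : Fin (m + 1) → M) (v : Fin m → R) : M :=
  e (Fin.last m) + ∑ i, v i • (e i.castSucc - e (Fin.last m))

theorem simplexChart_eq_sum (e : Fin (m + 1) → M) (v : Fin m → R) :
    simplexChart e v = ∑ i, v i • e i.castSucc + (1 - ∑ i, v i) • e (Fin.last m) := by
  simp only [simplexChart, smul_sub, Finset.sum_sub_distrib, sub_smul, one_smul,
    Finset.sum_smul]
  abel

theorem sum_mul_apply_eq_apply_simplexChart (e : Fin (m + 1) → M) (v : Fin m → R)
    (Λ : Fin (m + 1) → R) (L : M →ₗ[R] R) :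
    ∑ k, Λ k * L (e k) = (∑ k, Λ k) * L (simplexChart e v)
      + ∑ i, (Λ i.castSucc - (∑ k, Λ k) * v i) * L (e i.castSucc - e (Fin.last m)) := by
  have hterm : ∀ i, (Λ i.castSucc - (∑ k, Λ k) * v i) * L (e i.castSucc - e (Fin.last m))
      = Λ i.castSucc * L (e i.castSucc) - Λ i.castSucc * L (e (Fin.last m))
        - (∑ k, Λ k) * (v i * L (e i.castSucc)) + (∑ k, Λ k) * L (e (Fin.last m)) * v i :=
    fun i => by rw [map_sub]; ring
  simp only [hterm, simplexChart_eq_sum, map_add, map_sum, map_smul, smul_eq_mul,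
    Finset.sum_add_distrib, Finset.sum_sub_distrib, ← Finset.sum_mul, ← Finset.mul_sum,
    Fin.sum_univ_castSucc (f := fun k => Λ k * L (e k))]
  rw [Fin.sum_univ_castSucc (f := Λ)]
  ring

theorem sum_mul_apply_apply_eq_apply_simplexChart (e : Fin (m + 1) → M) (v : Fin m → R)
    (B : M →ₗ[R] M →ₗ[R] R) (hB : ∀ x y, B x y = B y x) :
    ∑ i, v i * B (e i.castSucc) (e i.castSucc)
        + (1 - ∑ i, v i) * B (e (Fin.last m)) (e (Fin.last m))
      = B (simplexChart e v) (simplexChart e v)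
        + ∑ i, v i * (1 - v i) * B (e i.castSucc - e (Fin.last m)) (e i.castSucc - e (Fin.last m))
        - 2 * ∑ i, ∑ j, if i < j then
            v i * v j * B (e i.castSucc - e (Fin.last m)) (e j.castSucc - e (Fin.last m))
          else 0 := by
  set o := e (Fin.last m)
  set w := ∑ i, v i • (e i.castSucc - o)
  have hww : B w w = ∑ i, ∑ j, v i * v j * B (e i.castSucc - o) (e j.castSucc - o) := by
    simp only [w, map_sum, map_smul, LinearMap.sum_apply, LinearMap.smul_apply, smul_eq_mul,
      Finset.mul_sum]
    rw [Finset.sum_comm]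
    exact Finset.sum_congr rfl fun i _ => Finset.sum_congr rfl fun j _ => by ring
  have how : B o w = ∑ i, v i * B o (e i.castSucc) - (∑ i, v i) * B o o := by
    simp [w, map_sum, map_smul, map_sub, mul_sub, Finset.sum_mul]
  have hdiag : ∑ i, v i * (1 - v i) * B (e i.castSucc - o) (e i.castSucc - o)
      + ∑ i, v i * v i * B (e i.castSucc - o) (e i.castSucc - o)
      = ∑ i, v i * B (e i.castSucc) (e i.castSucc) - 2 * ∑ i, v i * B o (e i.castSucc)
        + (∑ i, v i) * B o o := by
    simp only [← Finset.sum_add_distrib, Finset.mul_sum, Finset.sum_mul, ← Finset.sum_sub_distrib]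
    refine Finset.sum_congr rfl fun i _ => ?_
    simp only [map_sub, LinearMap.sub_apply, hB (e i.castSucc) o]
    ring
  rw [two_mul_sum_sum_ite_lt _ fun i j => by rw [hB]; ring, ← hww]
  change _ = B (o + w) (o + w) + _ - _
  simp only [map_add, LinearMap.add_apply, hB w o, how]
  linear_combination -hdiag

theorem hasFDerivAt_simplexChart {𝕜 E : Type*} [NontriviallyNormedField 𝕜]
    [NormedAddCommGroup E] [NormedSpace 𝕜 E] (e : Fin (m + 1) → E) (v : Fin m → 𝕜) :
    HasFDerivAt (simplexChart e)
      (∑ i, (ContinuousLinearMap.proj (R := 𝕜) i).smulRight (e i.castSucc - e (Fin.last m))) v :=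
  (HasFDerivAt.fun_sum fun i _ =>
    (hasFDerivAt_apply i v).smul_const (e i.castSucc - e (Fin.last m))).const_add _

end SimplexChart

theorem psum_self {n : ℕ} (x : Fin n → ℝ) : psum x n = ∑ i, x i := by
  simp [psum]

theorem strTheta_pos {n : ℕ} {t : ℝ} (ht : 0 < t) {v : Fin (n - 1) → ℝ}
    (hv : v ∈ simplexD (n - 1)) (j : Fin n) : 0 < strTheta n t v j := by
  obtain ⟨hv_pos, hv_sum⟩ := hv
  rw [psum_self] at hv_sum
  unfold strTheta
  split
  · exact mul_pos ht (hv_pos _)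
  · exact mul_pos ht (sub_pos.2 hv_sum)

theorem besselOp_eq_sum_fderiv {n : ℕ} (Λ : Fin n → ℝ) {F : (Fin n → ℝ) → ℝ} {x : Fin n → ℝ}
    (hF : DifferentiableAt ℝ (fderiv ℝ F) x) :
    besselOp Λ F x = ∑ k, (x k * fderiv ℝ (fderiv ℝ F) x (Pi.single k 1) (Pi.single k 1)
      + Λ k * fderiv ℝ F x (Pi.single k 1)) :=
  Finset.sum_congr rfl fun k _ => by
    rw [pderiv1, pderiv1, ← fderiv_fderiv_apply_apply hF]
    rfl

section StrThetaSucc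

variable {m : ℕ}

theorem strTheta_succ_castSucc (t : ℝ) (v : Fin m → ℝ) (i : Fin m) :
    strTheta (m + 1) t v i.castSucc = t * v i := by
  simp [strTheta]

theorem strTheta_succ_last (t : ℝ) (v : Fin m → ℝ) :
    strTheta (m + 1) t v (Fin.last m) = t * (1 - ∑ i, v i) := by
  simp [strTheta]

theorem strTheta_succ_eq_smul_simplexChart (t : ℝ) (v : Fin m → ℝ) :
    strTheta (m + 1) t v = t • simplexChart (fun k => Pi.single k (1 : ℝ)) v := by
  funext j
  refine Fin.lastCases ?_ (fun i => ?_) j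
  · simp [strTheta_succ_last, simplexChart_eq_sum]
  · simp [strTheta_succ_castSucc, simplexChart_eq_sum, Pi.single_apply]

theorem hasFDerivAt_strTheta_succ_time (v : Fin m → ℝ) (s : ℝ) :
    HasFDerivAt (fun s => strTheta (m + 1) s v)
      ((ContinuousLinearMap.id ℝ ℝ).smulRight (simplexChart (fun k => Pi.single k (1 : ℝ)) v))
      s := by
  simp only [strTheta_succ_eq_smul_simplexChart]
  exact (hasFDerivAt_id s).smul_const _

theorem hasFDerivAt_strTheta_succ_space (t : ℝ) (w : Fin m → ℝ) :
    HasFDerivAt (fun w : Fin m → ℝ => strTheta (m + 1) t w)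
      (t • ∑ i, (ContinuousLinearMap.proj (R := ℝ) i).smulRight
        (Pi.single i.castSucc 1 - Pi.single (Fin.last m) 1)) w := by
  simp only [strTheta_succ_eq_smul_simplexChart]
  exact (hasFDerivAt_simplexChart _ w).const_smul t

variable {F : (Fin (m + 1) → ℝ) → ℝ} {t : ℝ} {v : Fin m → ℝ}

theorem deriv_comp_strTheta_succ (hF : DifferentiableAt ℝ F (strTheta (m + 1) t v)) :
    deriv (fun s => F (strTheta (m + 1) s v)) t
      = fderiv ℝ F (strTheta (m + 1) t v) (simplexChart (fun k => Pi.single k (1 : ℝ)) v) := by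
  rw [← fderiv_apply_one_eq_deriv,
    fderiv_comp_of_hasFDerivAt (hasFDerivAt_strTheta_succ_time v t) hF]
  simp

theorem deriv_deriv_comp_strTheta_succ (hF : ContDiffAt ℝ 2 F (strTheta (m + 1) t v)) :
    deriv (deriv fun s => F (strTheta (m + 1) s v)) t
      = fderiv ℝ (fderiv ℝ F) (strTheta (m + 1) t v)
          (simplexChart (fun k => Pi.single k (1 : ℝ)) v)
          (simplexChart (fun k => Pi.single k (1 : ℝ)) v) :=
  (fderiv_fderiv_comp_apply_apply_of_hasFDerivAt (hasFDerivAt_strTheta_succ_time v) hF 1 1).trans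
    (by simp)

theorem pderiv1_comp_strTheta_succ (hF : DifferentiableAt ℝ F (strTheta (m + 1) t v))
    (i : Fin m) :
    pderiv1 i (fun w : Fin m → ℝ => F (strTheta (m + 1) t w)) v
      = t * fderiv ℝ F (strTheta (m + 1) t v)
          (Pi.single i.castSucc 1 - Pi.single (Fin.last m) 1) := by
  rw [pderiv1, fderiv_comp_of_hasFDerivAt (hasFDerivAt_strTheta_succ_space t v) hF]
  simp only [ContinuousLinearMap.comp_apply, smul_apply, sum_smulRight_proj_single, map_smul,
    smul_eq_mul]

theorem pderiv1_pderiv1_comp_strTheta_succ (hF : ContDiffAt ℝ 2 F (strTheta (m + 1) t v))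
    (i j : Fin m) :
    pderiv1 i (pderiv1 j fun w : Fin m → ℝ => F (strTheta (m + 1) t w)) v
      = t * t * fderiv ℝ (fderiv ℝ F) (strTheta (m + 1) t v)
          (Pi.single i.castSucc 1 - Pi.single (Fin.last m) 1)
          (Pi.single j.castSucc 1 - Pi.single (Fin.last m) 1) :=
  (fderiv_fderiv_comp_apply_apply_of_hasFDerivAt (hasFDerivAt_strTheta_succ_space t) hF
    (Pi.single i 1) (Pi.single j 1)).trans (by
      simp only [smul_apply, sum_smulRight_proj_single, map_smul, smul_eq_mul]
      ring)

theorem besselOp_strTheta_succ_eq (Λ : Fin (m + 1) → ℝ)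
    (hF : DifferentiableAt ℝ (fderiv ℝ F) (strTheta (m + 1) t v)) :
    besselOp Λ F (strTheta (m + 1) t v)
      = t * (∑ i, v i * fderiv ℝ (fderiv ℝ F) (strTheta (m + 1) t v)
              (Pi.single i.castSucc 1) (Pi.single i.castSucc 1)
          + (1 - ∑ i, v i) * fderiv ℝ (fderiv ℝ F) (strTheta (m + 1) t v)
              (Pi.single (Fin.last m) 1) (Pi.single (Fin.last m) 1))
        + ∑ k, Λ k * fderiv ℝ F (strTheta (m + 1) t v) (Pi.single k 1) := by
  rw [besselOp_eq_sum_fderiv Λ hF, Finset.sum_add_distrib, Fin.sum_univ_castSucc, mul_add,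
    Finset.mul_sum]
  simp only [strTheta_succ_castSucc, strTheta_succ_last, mul_assoc]

theorem besselOp_strTheta_succ (Λ : Fin (m + 1) → ℝ) (ht : t ≠ 0)
    (hF : ContDiffAt ℝ 2 F (strTheta (m + 1) t v)) :
    besselOp Λ F (strTheta (m + 1) t v)
      = t * deriv (deriv fun s => F (strTheta (m + 1) s v)) t
        + (∑ i, Λ i) * deriv (fun s => F (strTheta (m + 1) s v)) t
        + (1 / t) *
          ((∑ i : Fin m,
              v i * (1 - v i) * pderiv1 i (pderiv1 i fun w => F (strTheta (m + 1) t w)) v)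
            - 2 * (∑ i : Fin m, ∑ j : Fin m,
                if i < j then
                  v i * v j * pderiv1 i (pderiv1 j fun w => F (strTheta (m + 1) t w)) v
                else 0)
            + ∑ i : Fin m,
                (Λ i.castSucc - (∑ l, Λ l) * v i) *
                  pderiv1 i (fun w => F (strTheta (m + 1) t w)) v) := by
  have hF₁ : DifferentiableAt ℝ F (strTheta (m + 1) t v) := hF.differentiableAt (by simp)
  have hF₂ : DifferentiableAt ℝ (fderiv ℝ F) (strTheta (m + 1) t v) :=
    (hF.fderiv_right (m := 1) le_rfl).differentiableAt one_ne_zero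
  set B := fderiv ℝ (fderiv ℝ F) (strTheta (m + 1) t v)
  set L := fderiv ℝ F (strTheta (m + 1) t v)
  set u : Fin m → Fin (m + 1) → ℝ := fun i => Pi.single i.castSucc 1 - Pi.single (Fin.last m) 1
  have hquad := sum_mul_apply_apply_eq_apply_simplexChart (fun k => Pi.single k (1 : ℝ)) v
    B.toLinearMap₁₂ (hF.isSymmSndFDerivAt (by simp))
  have hlin := sum_mul_apply_eq_apply_simplexChart (fun k => Pi.single k (1 : ℝ)) v Λ
    (L : (Fin (m + 1) → ℝ) →ₗ[ℝ] ℝ)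
  simp only [ContinuousLinearMap.toLinearMap₁₂_apply_apply_apply,
    ContinuousLinearMap.coe_coe] at hquad hlin
  have hS1 : ∑ i, v i * (1 - v i) * pderiv1 i (pderiv1 i fun w => F (strTheta (m + 1) t w)) v
      = t * t * ∑ i, v i * (1 - v i) * B (u i) (u i) := by
    rw [Finset.mul_sum]
    exact Finset.sum_congr rfl fun i _ => by rw [pderiv1_pderiv1_comp_strTheta_succ hF]; ring
  have hS2 : ∑ i, ∑ j, (if i < j then
        v i * v j * pderiv1 i (pderiv1 j fun w => F (strTheta (m + 1) t w)) v else 0)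
      = t * t * ∑ i, ∑ j, if i < j then v i * v j * B (u i) (u j) else 0 := by
    simp only [Finset.mul_sum, mul_ite, mul_zero]
    refine Finset.sum_congr rfl fun i _ => Finset.sum_congr rfl fun j _ => ?_
    split_ifs
    · rw [pderiv1_pderiv1_comp_strTheta_succ hF]
      ring
    · rfl
  have hS3 : ∑ i, (Λ i.castSucc - (∑ l, Λ l) * v i)
        * pderiv1 i (fun w => F (strTheta (m + 1) t w)) v
      = t * ∑ i, (Λ i.castSucc - (∑ l, Λ l) * v i) * L (u i) := by
    rw [Finset.mul_sum]
    exact Finset.sum_congr rfl fun i _ => by rw [pderiv1_comp_strTheta_succ hF₁]; ring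
  rw [besselOp_strTheta_succ_eq Λ hF₂, hquad, hlin, deriv_comp_strTheta_succ hF₁,
    deriv_deriv_comp_strTheta_succ hF, hS1, hS2, hS3]
  field_simp
  ring

end StrThetaSucc

theorem isOpen_setOf_forall_pos {ι : Type*} [Finite ι] : IsOpen {x : ι → ℝ | ∀ i, 0 < x i} := by
  simpa only [Set.ofPred_forall] using
    isOpen_iInter_of_finite fun i => isOpen_lt continuous_const (continuous_apply i)

theorem stmt1_general (n : ℕ) (Λ : Fin n → ℝ) (F : (Fin n → ℝ) → ℝ)
    (hF : ContDiffOn ℝ ((⊤ : ℕ∞) : WithTop ℕ∞) F {x : Fin n → ℝ | ∀ i, 0 < x i}) :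
    ∀ t : ℝ, 0 < t → ∀ v ∈ simplexD (n - 1),
      besselOp Λ F (strTheta n t v)
        = t * deriv (deriv fun s => F (strTheta n s v)) t
          + (∑ i, Λ i) * deriv (fun s => F (strTheta n s v)) t
          + (1 / t) *
            ((∑ i : Fin (n - 1),
                v i * (1 - v i) * pderiv1 i (pderiv1 i fun w => F (strTheta n t w)) v)
              - 2 * (∑ i : Fin (n - 1), ∑ j : Fin (n - 1),
                  if i < j then
                    v i * v j * pderiv1 i (pderiv1 j fun w => F (strTheta n t w)) v
                  else 0)
              + ∑ i : Fin (n - 1),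
                  (Λ (Fin.castLE (Nat.sub_le n 1) i) - (∑ l, Λ l) * v i) *
                    pderiv1 i (fun w => F (strTheta n t w)) v) := by
  intro t ht v hv
  obtain _ | m := n
  · have hconst : (fun s => F (strTheta 0 s v)) = fun _ => F 0 :=
      funext fun s => congrArg F (Subsingleton.elim _ _)
    simp [besselOp, hconst]
  have hF₂ : ContDiffAt ℝ 2 F (strTheta (m + 1) t v) :=
    (hF.contDiffAt (isOpen_setOf_forall_pos.mem_nhds (strTheta_pos ht hv))).of_le
      (by norm_cast)
  -- `Fin (m + 1 - 1)` is `Fin m` and `Fin.castLE _ i` is `i.castSucc` up to definitional unfolding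
  exact besselOp_strTheta_succ Λ ht.ne' hF₂

/-- The Bessel operator in the stratified coordinates `(t,v)`. -/
theorem stmt1 (n : ℕ) (hn : 2 ≤ n) (Λ : Fin n → ℝ) (F : (Fin n → ℝ) → ℝ)
    (hF : ContDiffOn ℝ ((⊤ : ℕ∞) : WithTop ℕ∞) F {x : Fin n → ℝ | ∀ i, 0 < x i}) :
    ∀ t : ℝ, 0 < t → ∀ v ∈ simplexD (n - 1),
      besselOp Λ F (strTheta n t v)
        = t * deriv (deriv fun s => F (strTheta n s v)) t
          + (∑ i, Λ i) * deriv (fun s => F (strTheta n s v)) t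
          + (1 / t) *
            ((∑ i : Fin (n - 1),
                v i * (1 - v i) * pderiv1 i (pderiv1 i fun w => F (strTheta n t w)) v)
              - 2 * (∑ i : Fin (n - 1), ∑ j : Fin (n - 1),
                  if i < j then
                    v i * v j * pderiv1 i (pderiv1 j fun w => F (strTheta n t w)) v
                  else 0)
              + ∑ i : Fin (n - 1),
                  (Λ (Fin.castLE (Nat.sub_le n 1) i) - (∑ l, Λ l) * v i) *
                    pderiv1 i (fun w => F (strTheta n t w)) v) :=
  stmt1_general n Λ F hF
end
end

section
/- Let n ≥ 2, Λ = (λ₁,…,λ_n) ∈ ℝⁿ, |Λ| = λ₁+⋯+λ_n, and k ∈ ℕ. Define on functions of v ∈ ℝ^{n−1} the operator L_Λ = Σ_{i=1}^{n−1} v_i(1−v_i)∂²/∂v_i² − 2Σ_{1≤i<j≤n−1} v_i v_j ∂²/∂v_i∂v_j + Σ_{i=1}^{n−1}(λ_i − |Λ|v_i)∂/∂v_i. For every smooth g : (0,∞) → ℂ, every polynomial function P : ℝ^{n−1} → ℂ, and h(t,v) := g(t)P(v), the following identity holds for all t > 0 and v ∈ ℝ^{n−1}: [ t·∂²h/∂t²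 + |Λ|·∂h/∂t + t^{−1}·(L_Λ h) ](t,v) − t^k·[ s·d²/ds² + (|Λ|+2k)·d/ds ](s ↦ s^{−k}h(s,v)) evaluated at s = t = t^{−1} g(t)·( L_Λ P(v) + k(k+|Λ|−1)P(v) ). In particular, if L_Λ P = −k(k+|Λ|−1)P, then t^{−k}·[ t·∂²h/∂t² + |Λ|·∂h/∂t + t^{−1}L_Λ h ](t,v) = [ s·d²/ds² + (|Λ|+2k)·d/ds ](s ↦ s^{−k}h(s,v))(t) for all t > 0, v ∈ ℝ^{n−1}. -/
open MeasureTheory Finset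

noncomputable section

/-- Partial derivative in the `i`-th coordinate direction (complex valued). -/
def pderivC {m : ℕ} (i : Fin m) (F : (Fin m → ℝ) → ℂ) : (Fin m → ℝ) → ℂ :=
  fun v => fderiv ℝ F v (Pi.single i 1)

/-- The operator
`L_Λ = Σᵢ vᵢ(1-vᵢ)∂²/∂vᵢ² - 2Σ_{i<j} vᵢvⱼ∂²/∂vᵢ∂vⱼ + Σᵢ(λᵢ - |Λ|vᵢ)∂/∂vᵢ`
acting on functions of `v ∈ ℝ^{n-1}`. -/
def Lop {n : ℕ} (Λ : Fin n → ℝ) (F : (Fin (n - 1) → ℝ) → ℂ) (v : Fin (n - 1) → ℝ) : ℂ :=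
  (∑ i : Fin (n - 1), (↑(v i * (1 - v i)) : ℂ) * pderivC i (pderivC i F) v)
    - 2 * (∑ i : Fin (n - 1), ∑ j : Fin (n - 1),
        if i < j then (↑(v i * v j) : ℂ) * pderivC i (pderivC j F) v else 0)
    + ∑ i : Fin (n - 1),
        (↑(Λ (Fin.castLE (Nat.sub_le n 1) i) - (∑ l, Λ l) * v i) : ℂ) * pderivC i F v

lemma hasDerivAt_ofReal_pow_inv (m : ℕ) {t : ℝ} (ht : t ≠ 0) :
    HasDerivAt (fun s : ℝ => (((s : ℂ)) ^ m)⁻¹)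
      (-(m : ℂ) * (((t : ℂ)) ^ (m + 1))⁻¹) t := by
  have hT : (t : ℂ) ≠ 0 := by exact_mod_cast ht
  have h := (hasDerivAt_zpow (-(m : ℤ)) (t : ℂ) (Or.inl hT)).comp_ofReal
  have hfun : (fun s : ℝ => ((s : ℂ)) ^ (-(m : ℤ))) = fun s : ℝ => (((s : ℂ)) ^ m)⁻¹ := by
    funext s; rw [zpow_neg, zpow_natCast]
  rw [hfun] at h
  convert h using 1
  have : (-(m : ℤ) - 1 : ℤ) = -((m : ℤ) + 1) := by ring
  rw [this, zpow_neg, ← zpow_natCast (t : ℂ) (m + 1)]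
  push_cast
  ring_nf

lemma contDiff_pderivC {m : ℕ} (i : Fin m) (F : (Fin m → ℝ) → ℂ)
    (hF : ContDiff ℝ ((⊤ : ℕ∞) : WithTop ℕ∞) F) :
    ContDiff ℝ ((⊤ : ℕ∞) : WithTop ℕ∞) (pderivC i F) := by
  have h : ContDiff ℝ ((⊤ : ℕ∞) : WithTop ℕ∞) (fderiv ℝ F) :=
    hF.fderiv_right (by exact_mod_cast le_top)
  exact h.clm_apply contDiff_const

lemma pderivC_const_mul {m : ℕ} (i : Fin m) (F : (Fin m → ℝ) → ℂ)
    (hF : Differentiable ℝ F) (c : ℂ) :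
    pderivC i (fun w => c * F w) = fun w => c * pderivC i F w := by
  funext v
  simp [pderivC, fderiv_const_mul (hF v) c]

lemma contDiff_evalP {m : ℕ} (q : MvPolynomial (Fin m) ℂ) :
    ContDiff ℝ ((⊤ : ℕ∞) : WithTop ℕ∞)
      (fun v : Fin m → ℝ => MvPolynomial.eval (fun i => (v i : ℂ)) q) := by
  induction q using MvPolynomial.induction_on with
  | C a => simpa using contDiff_const
  | add p r hp hr => simpa using hp.add hr
  | mul_X p i hp =>
      simp only [MvPolynomial.eval_mul, MvPolynomial.eval_X]
      exact hp.mul (Complex.ofRealCLM.contDiff.comp (contDiff_pi.mp contDiff_id i))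

lemma Lop_smul {n : ℕ} (Λ : Fin n → ℝ) (P : (Fin (n - 1) → ℝ) → ℂ)
    (hP : ContDiff ℝ ((⊤ : ℕ∞) : WithTop ℕ∞) P) (c : ℂ) (v : Fin (n - 1) → ℝ) :
    Lop Λ (fun w => c * P w) v = c * Lop Λ P v := by
  have hPd : Differentiable ℝ P := hP.differentiable (by simp)
  have key1 : ∀ i : Fin (n - 1), pderivC i (fun w => c * P w) v = c * pderivC i P v :=
    fun i => congrFun (pderivC_const_mul i P hPd c) v
  have key2 : ∀ i j : Fin (n - 1),
      pderivC i (pderivC j fun w => c * P w) v = c * pderivC i (pderivC j P) v := by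
    intro i j
    rw [pderivC_const_mul j P hPd c,
      pderivC_const_mul i (pderivC j P)
        ((contDiff_pderivC j P hP).differentiable (by simp)) c]
  simp only [Lop, key1, key2]
  simp only [mul_sub, mul_add, Finset.mul_sum, mul_ite, mul_zero]
  congr 1
  · congr 1
    · exact Finset.sum_congr rfl fun i _ => by push_cast; ring
    · refine Finset.sum_congr rfl fun i _ => Finset.sum_congr rfl fun j _ => ?_
      split_ifs with h
      · push_cast; ring
      · rfl
  · exact Finset.sum_congr rfl fun i _ => by push_cast; ring

/-- Conformal covariance of the Bessel operator in the stratified coordinates: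
for `h(t,v) = g(t)P(v)`. -/
theorem stmt2 (n : ℕ) (hn : 2 ≤ n) (Λ : Fin n → ℝ) (k : ℕ)
    (g : ℝ → ℂ) (hg : ContDiffOn ℝ ((⊤ : ℕ∞) : WithTop ℕ∞) g (Set.Ioi 0))
    (P : (Fin (n - 1) → ℝ) → ℂ)
    (hP : ∃ q : MvPolynomial (Fin (n - 1)) ℂ,
      P = fun v => MvPolynomial.eval (fun i => (v i : ℂ)) q) :
    (∀ t : ℝ, 0 < t → ∀ v : Fin (n - 1) → ℝ,
      ((t : ℂ) * deriv (deriv fun s : ℝ => g s * P v) t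
          + (↑(∑ l, Λ l) : ℂ) * deriv (fun s : ℝ => g s * P v) t
          + (↑(t⁻¹) : ℂ) * Lop Λ (fun w => g t * P w) v)
        - (t : ℂ) ^ k *
            ((t : ℂ) * deriv (deriv fun s : ℝ => (↑((s ^ k)⁻¹) : ℂ) * (g s * P v)) t
              + (↑((∑ l, Λ l) + 2 * k) : ℂ) *
                  deriv (fun s : ℝ => (↑((s ^ k)⁻¹) : ℂ) * (g s * P v)) t)
      = (↑(t⁻¹) : ℂ) * g t *
          (Lop Λ P v + (↑((k : ℝ) * ((k : ℝ) + (∑ l, Λ l) - 1)) : ℂ) * P v)) ∧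
    ((∀ v : Fin (n - 1) → ℝ,
        Lop Λ P v = -(↑((k : ℝ) * ((k : ℝ) + (∑ l, Λ l) - 1)) : ℂ) * P v) →
      ∀ t : ℝ, 0 < t → ∀ v : Fin (n - 1) → ℝ,
        (↑((t ^ k)⁻¹) : ℂ) *
            ((t : ℂ) * deriv (deriv fun s : ℝ => g s * P v) t
              + (↑(∑ l, Λ l) : ℂ) * deriv (fun s : ℝ => g s * P v) t
              + (↑(t⁻¹) : ℂ) * Lop Λ (fun w => g t * P w) v)
          = (t : ℂ) * deriv (deriv fun s : ℝ => (↑((s ^ k)⁻¹) : ℂ) * (g s * P v)) t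
              + (↑((∑ l, Λ l) + 2 * k) : ℂ) *
                  deriv (fun s : ℝ => (↑((s ^ k)⁻¹) : ℂ) * (g s * P v)) t) := by
  obtain ⟨q, hq⟩ := hP
  have hPs : ContDiff ℝ ((⊤ : ℕ∞) : WithTop ℕ∞) P := hq ▸ contDiff_evalP q
  have hg' : ContDiffOn ℝ ((⊤ : ℕ∞) : WithTop ℕ∞) (deriv g) (Set.Ioi 0) :=
    hg.deriv_of_isOpen isOpen_Ioi (by exact_mod_cast le_top)
  have hgd : ∀ s ∈ Set.Ioi (0 : ℝ), HasDerivAt g (deriv g s) s := fun s hs =>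
    ((hg.contDiffAt (isOpen_Ioi.mem_nhds hs)).differentiableAt
      (by simp)).hasDerivAt
  have hg1d : ∀ s ∈ Set.Ioi (0 : ℝ), HasDerivAt (deriv g) (deriv (deriv g) s) s := fun s hs =>
    ((hg'.contDiffAt (isOpen_Ioi.mem_nhds hs)).differentiableAt
      (by simp)).hasDerivAt
  have main : ∀ t : ℝ, 0 < t → ∀ v : Fin (n - 1) → ℝ,
      ((t : ℂ) * deriv (deriv fun s : ℝ => g s * P v) t
          + (↑(∑ l, Λ l) : ℂ) * deriv (fun s : ℝ => g s * P v) t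
          + (↑(t⁻¹) : ℂ) * Lop Λ (fun w => g t * P w) v)
        - (t : ℂ) ^ k *
            ((t : ℂ) * deriv (deriv fun s : ℝ => (↑((s ^ k)⁻¹) : ℂ) * (g s * P v)) t
              + (↑((∑ l, Λ l) + 2 * k) : ℂ) *
                  deriv (fun s : ℝ => (↑((s ^ k)⁻¹) : ℂ) * (g s * P v)) t)
      = (↑(t⁻¹) : ℂ) * g t *
          (Lop Λ P v + (↑((k : ℝ) * ((k : ℝ) + (∑ l, Λ l) - 1)) : ℂ) * P v) := by
    intro t ht v
    have hT : (t : ℂ) ≠ 0 := by exact_mod_cast ht.ne'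
    have E1 : ∀ s ∈ Set.Ioi (0 : ℝ),
        HasDerivAt (fun s : ℝ => g s * P v) (deriv g s * P v) s :=
      fun s hs => (hgd s hs).mul_const _
    have D1 : deriv (fun s : ℝ => g s * P v) t = deriv g t * P v := (E1 t ht).deriv
    have Ev1 : deriv (fun s : ℝ => g s * P v) =ᶠ[nhds t] fun s => deriv g s * P v := by
      filter_upwards [Ioi_mem_nhds ht] with s hs using (E1 s hs).deriv
    have D2 : deriv (deriv fun s : ℝ => g s * P v) t = deriv (deriv g) t * P v := by
      rw [Ev1.deriv_eq]; exact ((hg1d t ht).mul_const _).deriv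
    have hfun : (fun s : ℝ => (↑((s ^ k)⁻¹) : ℂ) * (g s * P v))
        = fun s : ℝ => (((s : ℂ)) ^ k)⁻¹ * (g s * P v) := by
      funext s; push_cast; ring
    rw [hfun]
    have Eu : ∀ s ∈ Set.Ioi (0 : ℝ),
        HasDerivAt (fun s : ℝ => (((s : ℂ)) ^ k)⁻¹ * (g s * P v))
          (-(k : ℂ) * (((s : ℂ)) ^ (k + 1))⁻¹ * (g s * P v)
            + (((s : ℂ)) ^ k)⁻¹ * (deriv g s * P v)) s :=
      fun s hs => (hasDerivAt_ofReal_pow_inv k (ne_of_gt hs)).mul (E1 s hs)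
    have Du1 : deriv (fun s : ℝ => (((s : ℂ)) ^ k)⁻¹ * (g s * P v)) t
        = -(k : ℂ) * (((t : ℂ)) ^ (k + 1))⁻¹ * (g t * P v)
            + (((t : ℂ)) ^ k)⁻¹ * (deriv g t * P v) := (Eu t ht).deriv
    have Evu : deriv (fun s : ℝ => (((s : ℂ)) ^ k)⁻¹ * (g s * P v))
        =ᶠ[nhds t] fun s => -(k : ℂ) * (((s : ℂ)) ^ (k + 1))⁻¹ * (g s * P v)
            + (((s : ℂ)) ^ k)⁻¹ * (deriv g s * P v) := by
      filter_upwards [Ioi_mem_nhds ht] with s hs using (Eu s hs).deriv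
    have Eu2 := (((hasDerivAt_ofReal_pow_inv (k + 1) ht.ne').const_mul (-(k : ℂ))).mul
        (E1 t ht)).add
      ((hasDerivAt_ofReal_pow_inv k ht.ne').mul ((hg1d t ht).mul_const (P v)))
    have D2u := Evu.deriv_eq.trans Eu2.deriv
    rw [D2, D1, Du1, D2u, Lop_smul Λ P hPs (g t) v]
    push_cast
    simp only [← inv_pow]
    have h1 : (t : ℂ) * (↑t)⁻¹ = 1 := mul_inv_cancel₀ hT
    have h2 : (t : ℂ) ^ k * ((↑t)⁻¹) ^ k = 1 := by rw [← mul_pow, h1, one_pow]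
    linear_combination
      (-(k : ℂ) * ((k : ℂ) + 1) * g t * P v * (↑t)⁻¹
        + 2 * (k : ℂ) * deriv g t * P v) * h1
      + (-(k : ℂ) * ((k : ℂ) + 1) * g t * P v * (t : ℂ) * ((↑t)⁻¹) ^ 2
        + 2 * (k : ℂ) * deriv g t * P v * (t : ℂ) * (↑t)⁻¹
        - deriv (deriv g) t * P v * (t : ℂ)
        + (k : ℂ) * ((∑ l, (Λ l : ℂ)) + 2 * (k : ℂ)) * g t * P v * (↑t)⁻¹
        - ((∑ l, (Λ l : ℂ)) + 2 * (k : ℂ)) * deriv g t * P v) * h2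
  refine ⟨main, ?_⟩
  intro hEig t ht v
  have hT : (t : ℂ) ≠ 0 := by exact_mod_cast ht.ne'
  have h1 := main t ht v
  rw [hEig v] at h1
  have h2 := sub_eq_zero.mp (h1.trans (by ring))
  rw [h2]
  have hTk : ((t : ℂ)) ^ k ≠ 0 := pow_ne_zero _ hT
  push_cast
  rw [inv_mul_cancel_left₀ hTk]
end
end

section
/- Let n ≥ 3 and 1 ≤ p ≤ n−2. The map ι_{n−p}^{n} is a bijection from Ω_{n−p} × B^p onto Ω_n, its inverse is given for z = (x,y) ∈ Ω_n with x ∈ ℝ^{n−p}, y ∈ ℝ^p by z ↦ (x, −Q_{1,n−p−1}(x)^{−1/2} y), and for all y ∈ Ω_{n−p}, v ∈ B^p one has Q_{1,n−1}(ι_{n−p}^{n}(y,v)) = Q_{1,n−p−1}(y)·(1−‖v‖²). -/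
open MeasureTheory Finset

noncomputable section

/-- The Lorentz quadratic form `Q_{1,m-1}(x) = x₁² - x₂² - ⋯ - x_m²`. -/
def Qform {m : ℕ} (x : Fin m → ℝ) : ℝ :=
  ∑ i : Fin m, (if (i : ℕ) = 0 then (1 : ℝ) else -1) * x i ^ 2

/-- The Lorentz cone `Ω_m = {x : x₁ > 0, Q_{1,m-1}(x) > 0}`. -/
def coneΩ (m : ℕ) : Set (Fin m → ℝ) :=
  {x | 0 < Qform x ∧ ∀ i : Fin m, (i : ℕ) = 0 → 0 < x i}

/-- The open unit ball in `ℝ^p`. -/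
def ballB (p : ℕ) : Set (Fin p → ℝ) := {v | ∑ i, v i ^ 2 < 1}

/-- The stratification map `ι_{n-p}^n(y,v) = (y, -Q_{1,n-p-1}(y)^{1/2} v)`. -/
def iotaL (n p : ℕ) (y : Fin (n - p) → ℝ) (v : Fin p → ℝ) : Fin n → ℝ := fun j =>
  if h : (j : ℕ) < n - p then y ⟨j, h⟩
  else -Real.sqrt (Qform y) * v ⟨(j : ℕ) - (n - p), by have := j.isLt; omega⟩

lemma sum_split (n p : ℕ) (hpn : p ≤ n) (f : Fin n → ℝ) :
    ∑ j, f j = (∑ i : Fin (n - p), f (Fin.castLE (Nat.sub_le n p) i)) +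
      ∑ i : Fin p, f ⟨n - p + (i : ℕ), by omega⟩ := by
  have h : n - p + p = n := by omega
  rw [← Equiv.sum_comp (finSumFinEquiv.trans (finCongr h)) f, Fintype.sum_sum_type]
  congr 1

lemma qform_split (n p : ℕ) (hpn : p < n) (z : Fin n → ℝ) :
    Qform z = Qform (fun i : Fin (n - p) => z (Fin.castLE (Nat.sub_le n p) i)) -
      ∑ i : Fin p, z ⟨n - p + (i : ℕ), by omega⟩ ^ 2 := by
  simp only [Qform]
  rw [sum_split n p hpn.le]
  have key : ∀ (i : Fin p) (h : n - p + (i : ℕ) < n),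
      (if ((⟨n - p + (i : ℕ), h⟩ : Fin n) : ℕ) = 0 then (1 : ℝ) else -1) *
        z ⟨n - p + (i : ℕ), h⟩ ^ 2 = -(z ⟨n - p + (i : ℕ), h⟩ ^ 2) := by
    intro i h
    rw [if_neg (by simp; omega)]
    ring
  rw [Finset.sum_congr rfl fun i _ => key i _, Finset.sum_neg_distrib]
  rfl

lemma iotaL_lt (n p : ℕ) (y : Fin (n - p) → ℝ) (v : Fin p → ℝ) (j : Fin n)
    (h : (j : ℕ) < n - p) : iotaL n p y v j = y ⟨j, h⟩ := dif_pos h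

lemma iotaL_castLE (n p : ℕ) (y : Fin (n - p) → ℝ) (v : Fin p → ℝ) (i : Fin (n - p)) :
    iotaL n p y v (Fin.castLE (Nat.sub_le n p) i) = y i := by
  rw [iotaL_lt n p y v _ i.isLt]
  exact congrArg y (Fin.ext rfl)

lemma iotaL_ge (n p : ℕ) (y : Fin (n - p) → ℝ) (v : Fin p → ℝ) (i : Fin p)
    (h : n - p + (i : ℕ) < n) :
    iotaL n p y v ⟨n - p + (i : ℕ), h⟩ = -Real.sqrt (Qform y) * v i := by
  rw [iotaL, dif_neg (by simp)]
  congr 1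
  exact congrArg v (Fin.ext (by simp))

lemma qform_iota (n p : ℕ) (hpn : p < n)
    (y : Fin (n - p) → ℝ) (v : Fin p → ℝ) (hy : 0 ≤ Qform y) :
    Qform (iotaL n p y v) = Qform y * (1 - ∑ i, v i ^ 2) := by
  rw [qform_split n p hpn]
  have h1 : (fun i : Fin (n - p) => iotaL n p y v (Fin.castLE (Nat.sub_le n p) i)) = y := by
    funext i; exact iotaL_castLE n p y v i
  rw [h1]
  have h2 : ∀ i : Fin p, iotaL n p y v ⟨n - p + (i : ℕ), by omega⟩ ^ 2
      = Qform y * v i ^ 2 := by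
    intro i
    rw [iotaL_ge, mul_pow, neg_sq, Real.sq_sqrt hy]
  rw [Finset.sum_congr rfl fun i _ => h2 i, ← Finset.mul_sum]
  ring

/-- `ι_{n-p}^n` is a bijection from `Ω_{n-p} × B^p` onto `Ω_n`, with the stated inverse,
and `Q_{1,n-1}(ι(y,v)) = Q_{1,n-p-1}(y)(1-‖v‖²)`. -/
theorem stmt4 (n p : ℕ) (hn : 3 ≤ n) (hp : 1 ≤ p) (hpn : p ≤ n - 2) :
    Set.BijOn (fun q : (Fin (n - p) → ℝ) × (Fin p → ℝ) => iotaL n p q.1 q.2)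
      (coneΩ (n - p) ×ˢ ballB p) (coneΩ n) ∧
    Set.InvOn
      (fun z : Fin n → ℝ =>
        ((fun i : Fin (n - p) => z (Fin.castLE (Nat.sub_le n p) i)),
          fun i : Fin p =>
            -(Real.sqrt (Qform fun i' : Fin (n - p) => z (Fin.castLE (Nat.sub_le n p) i')))⁻¹ *
              z ⟨n - p + (i : ℕ), by have := i.isLt; omega⟩))
      (fun q : (Fin (n - p) → ℝ) × (Fin p → ℝ) => iotaL n p q.1 q.2)
      (coneΩ (n - p) ×ˢ ballB p) (coneΩ n) ∧
    ∀ y ∈ coneΩ (n - p), ∀ v ∈ ballB p,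
      Qform (iotaL n p y v) = Qform y * (1 - ∑ i, v i ^ 2) := by
  have hpn' : p < n := by omega
  have hm2 : 2 ≤ n - p := by omega
  -- the Q identity
  have key : ∀ y ∈ coneΩ (n - p), ∀ v ∈ ballB p,
      Qform (iotaL n p y v) = Qform y * (1 - ∑ i, v i ^ 2) := by
    intro y hy v _
    exact qform_iota n p hpn' y v hy.1.le
  -- forward maps-to
  have hmaps : Set.MapsTo (fun q : (Fin (n - p) → ℝ) × (Fin p → ℝ) => iotaL n p q.1 q.2)
      (coneΩ (n - p) ×ˢ ballB p) (coneΩ n) := by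
    rintro ⟨y, v⟩ ⟨hy, hv⟩
    refine ⟨?_, ?_⟩
    · rw [key y hy v hv]
      exact mul_pos hy.1 (sub_pos.2 hv)
    · intro j hj
      have hjlt : (j : ℕ) < n - p := by omega
      show 0 < iotaL n p y v j
      rw [iotaL_lt n p y v j hjlt]
      exact hy.2 ⟨j, hjlt⟩ hj
  -- left inverse
  have hleft : Set.LeftInvOn
      (fun z : Fin n → ℝ =>
        ((fun i : Fin (n - p) => z (Fin.castLE (Nat.sub_le n p) i)),
          fun i : Fin p =>
            -(Real.sqrt (Qform fun i' : Fin (n - p) => z (Fin.castLE (Nat.sub_le n p) i')))⁻¹ *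
              z ⟨n - p + (i : ℕ), by have := i.isLt; omega⟩))
      (fun q : (Fin (n - p) → ℝ) × (Fin p → ℝ) => iotaL n p q.1 q.2)
      (coneΩ (n - p) ×ˢ ballB p) := by
    rintro ⟨y, v⟩ ⟨hy, hv⟩
    have h1 : (fun i : Fin (n - p) => iotaL n p y v (Fin.castLE (Nat.sub_le n p) i)) = y := by
      funext i; exact iotaL_castLE n p y v i
    have hs : Real.sqrt (Qform y) ≠ 0 := ne_of_gt (Real.sqrt_pos.2 hy.1)
    refine Prod.ext h1 ?_
    funext i
    show -(Real.sqrt (Qform fun i' : Fin (n - p) =>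
        iotaL n p y v (Fin.castLE (Nat.sub_le n p) i')))⁻¹ *
        iotaL n p y v ⟨n - p + (i : ℕ), by omega⟩ = v i
    rw [h1, iotaL_ge]
    field_simp
  -- right inverse
  have hright : Set.RightInvOn
      (fun z : Fin n → ℝ =>
        ((fun i : Fin (n - p) => z (Fin.castLE (Nat.sub_le n p) i)),
          fun i : Fin p =>
            -(Real.sqrt (Qform fun i' : Fin (n - p) => z (Fin.castLE (Nat.sub_le n p) i')))⁻¹ *
              z ⟨n - p + (i : ℕ), by have := i.isLt; omega⟩))
      (fun q : (Fin (n - p) → ℝ) × (Fin p → ℝ) => iotaL n p q.1 q.2)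
      (coneΩ n) := by
    intro z hz
    have e2 : Qform z = Qform (fun i : Fin (n - p) => z (Fin.castLE (Nat.sub_le n p) i)) -
        ∑ i : Fin p, z ⟨n - p + (i : ℕ), by omega⟩ ^ 2 := qform_split n p hpn' z
    have hSnn : 0 ≤ ∑ i : Fin p, z ⟨n - p + (i : ℕ), by omega⟩ ^ 2 :=
      Finset.sum_nonneg fun i _ => sq_nonneg _
    have hQx : 0 < Qform (fun i : Fin (n - p) => z (Fin.castLE (Nat.sub_le n p) i)) := by
      have := hz.1; linarith
    have hs : Real.sqrt (Qform fun i : Fin (n - p) => z (Fin.castLE (Nat.sub_le n p) i)) ≠ 0 :=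
      ne_of_gt (Real.sqrt_pos.2 hQx)
    have main : iotaL n p (fun i : Fin (n - p) => z (Fin.castLE (Nat.sub_le n p) i))
        (fun i : Fin p =>
          -(Real.sqrt (Qform fun i' : Fin (n - p) => z (Fin.castLE (Nat.sub_le n p) i')))⁻¹ *
            z ⟨n - p + (i : ℕ), by omega⟩) = z := by
      funext j
      by_cases hj : (j : ℕ) < n - p
      · rw [iotaL_lt _ _ _ _ j hj]
        exact congrArg z (Fin.ext rfl)
      · rw [iotaL, dif_neg hj]
        show -Real.sqrt (Qform fun i' : Fin (n - p) => z (Fin.castLE (Nat.sub_le n p) i')) *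
            (-(Real.sqrt (Qform fun i' : Fin (n - p) => z (Fin.castLE (Nat.sub_le n p) i')))⁻¹ *
              z ⟨n - p + ((j : ℕ) - (n - p)), by omega⟩) = z j
        have gen : ∀ (a b c : ℝ), a ≠ 0 → b = c → -a * (-a⁻¹ * b) = c := by
          rintro a b c ha rfl; field_simp
        exact gen _ _ _ hs
          (congrArg z (Fin.ext (show n - p + ((j : ℕ) - (n - p)) = (j : ℕ) by omega)))
    exact main
  -- inverse maps-to
  have hgmaps : Set.MapsTo
      (fun z : Fin n → ℝ =>
        ((fun i : Fin (n - p) => z (Fin.castLE (Nat.sub_le n p) i)),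
          fun i : Fin p =>
            -(Real.sqrt (Qform fun i' : Fin (n - p) => z (Fin.castLE (Nat.sub_le n p) i')))⁻¹ *
              z ⟨n - p + (i : ℕ), by have := i.isLt; omega⟩))
      (coneΩ n) (coneΩ (n - p) ×ˢ ballB p) := by
    intro z hz
    have e2 : Qform z = Qform (fun i : Fin (n - p) => z (Fin.castLE (Nat.sub_le n p) i)) -
        ∑ i : Fin p, z ⟨n - p + (i : ℕ), by omega⟩ ^ 2 := qform_split n p hpn' z
    have hSnn : 0 ≤ ∑ i : Fin p, z ⟨n - p + (i : ℕ), by omega⟩ ^ 2 :=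
      Finset.sum_nonneg fun i _ => sq_nonneg _
    have hQx : 0 < Qform (fun i : Fin (n - p) => z (Fin.castLE (Nat.sub_le n p) i)) := by
      have := hz.1; linarith
    constructor
    · refine ⟨hQx, fun i hi => ?_⟩
      exact hz.2 (Fin.castLE (Nat.sub_le n p) i) hi
    · show (∑ i : Fin p,
        (-(Real.sqrt (Qform fun i' : Fin (n - p) => z (Fin.castLE (Nat.sub_le n p) i')))⁻¹ *
          z ⟨n - p + (i : ℕ), by omega⟩) ^ 2) < 1
      have e1 : (∑ i : Fin p,
          (-(Real.sqrt (Qform fun i' : Fin (n - p) => z (Fin.castLE (Nat.sub_le n p) i')))⁻¹ *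
            z ⟨n - p + (i : ℕ), by omega⟩) ^ 2)
          = (Qform fun i : Fin (n - p) => z (Fin.castLE (Nat.sub_le n p) i))⁻¹ *
            ∑ i : Fin p, z ⟨n - p + (i : ℕ), by omega⟩ ^ 2 := by
        rw [Finset.mul_sum]
        refine Finset.sum_congr rfl fun i _ => ?_
        rw [mul_pow, neg_sq, inv_pow, Real.sq_sqrt hQx.le]
      rw [e1]
      rw [inv_mul_lt_iff₀ hQx, mul_one]
      have := hz.1; linarith
  exact ⟨⟨hmaps, hleft.injOn, hright.surjOn hgmaps⟩, ⟨hleft, hright⟩, key⟩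
end
end

section
/- Let n ≥ 3, 1 ≤ p ≤ n−2 and λ ∈ ℝ. For every measurable function f : Ω_n → [0,∞], ∫_{Ω_n} f(x)·Q_{1,n−1}(x)^{λ−n/2} dx = ∫_{Ω_{n−p}} ∫_{B^p} f(ι_{n−p}^{n}(y,v))·Q_{1,n−p−1}(y)^{λ−(n−p)/2}·(1−‖v‖²)^{λ−n/2} dv dy, where dx, dy, dv denote Lebesgue measures (both sides possibly equal to +∞). -/
open MeasureTheory Finset
open scoped ENNReal

noncomputable section

/-!
Write `x ∈ ℝⁿ` as `x = (y, z)` with `y ∈ ℝ^{n-p}`, `z ∈ ℝ^p`. Then `Q(x) = Q(y) - ‖z‖²`, so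
`x ∈ Ω_n` iff `y ∈ Ω_{n-p}` and `z` lies in the ball of radius `Q(y)^{1/2}`. By Tonelli the
integral over `Ω_n` becomes an iterated one, and in each fibre the substitution
`z = -Q(y)^{1/2} v` maps `B^p` onto that ball with Jacobian `Q(y)^{p/2}` while
`Q(x) = Q(y) (1 - ‖v‖²)`; collecting the powers of `Q(y)` gives the exponent `λ - (n-p)/2`.
-/

open scoped Pointwise

theorem MeasureTheory.Measure.setLIntegral_smul_set {E : Type*} [NormedAddCommGroup E]
    [NormedSpace ℝ E] [MeasurableSpace E] [BorelSpace E] [FiniteDimensional ℝ E]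
    (μ : Measure E) [μ.IsAddHaarMeasure] (g : E → ℝ≥0∞) {r : ℝ} (hr : r ≠ 0) (s : Set E) :
    ∫⁻ x in r • s, g x ∂μ =
      ENNReal.ofReal |r ^ Module.finrank ℝ E| * ∫⁻ x in s, g (r • x) ∂μ := by
  set e : E ≃ᵐ E := MeasurableEquiv.smul₀ r hr
  have hs : e ⁻¹' (r • s) = s := by ext x; exact Set.smul_mem_smul_set_iff₀ hr s x
  have key : ∫⁻ x in s, g (r • x) ∂μ =
      ENNReal.ofReal |(r ^ Module.finrank ℝ E)⁻¹| * ∫⁻ x in r • s, g x ∂μ := by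
    change ∫⁻ x in s, g (e x) ∂μ = _
    conv_lhs => rw [← hs]
    rw [← lintegral_map_equiv, ← e.measurableEmbedding.restrict_map, MeasurableEquiv.coe_smul₀,
      map_addHaar_smul μ hr, Measure.restrict_smul, lintegral_smul_measure, smul_eq_mul]
  rw [key, ← mul_assoc, ← ENNReal.ofReal_mul (abs_nonneg _), ← abs_mul,
    mul_inv_cancel₀ (pow_ne_zero _ hr), abs_one, ENNReal.ofReal_one, one_mul]

lemma continuous_Qform {m : ℕ} : Continuous (Qform (m := m)) := by
  unfold Qform; fun_prop

lemma isOpen_coneΩ (m : ℕ) : IsOpen (coneΩ m) := by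
  simp only [coneΩ, Set.ofPred_and, Set.ofPred_forall]
  refine (isOpen_lt continuous_const continuous_Qform).inter (isOpen_iInter_of_finite fun i => ?_)
  by_cases hi : (i : ℕ) = 0
  · simpa [hi] using isOpen_lt continuous_const (continuous_apply i)
  · simp [hi]

lemma mem_coneΩ_iff {m : ℕ} (hm : 0 < m) {x : Fin m → ℝ} :
    x ∈ coneΩ m ↔ 0 < Qform x ∧ 0 < x ⟨0, hm⟩ := by
  refine and_congr_right fun _ => ⟨fun hx => hx _ rfl, fun hx i hi => ?_⟩
  rwa [show i = ⟨0, hm⟩ from Fin.ext hi]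

lemma measurableSet_ballB (p : ℕ) : MeasurableSet (ballB p) := by
  unfold ballB; measurability

lemma smul_ballB {p : ℕ} {c : ℝ} (hc : c ≠ 0) : c • ballB p = {z | ∑ i, z i ^ 2 < c ^ 2} := by
  ext z
  rw [Set.mem_smul_set_iff_inv_smul_mem₀ hc]
  simp only [ballB, Set.mem_ofPred_eq, Pi.smul_apply, smul_eq_mul, mul_pow, ← Finset.mul_sum,
    inv_pow, inv_mul_lt_iff₀ (pow_pos (abs_pos.2 hc) 2 |>.trans_eq (sq_abs c)), mul_one]

def finSplitEquiv {n p : ℕ} (h : p ≤ n) : Fin (n - p) ⊕ Fin p ≃ Fin n :=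
  finSumFinEquiv.trans (finCongr (Nat.sub_add_cancel h))

def joinCoords (n p : ℕ) (w : (Fin (n - p) → ℝ) × (Fin p → ℝ)) : Fin n → ℝ := fun j =>
  if h : (j : ℕ) < n - p then w.1 ⟨j, h⟩
  else w.2 ⟨(j : ℕ) - (n - p), by have := j.isLt; omega⟩

section joinCoords

variable {n p : ℕ}

@[simp] lemma val_finSplitEquiv_inl (h : p ≤ n) (i : Fin (n - p)) :
    (finSplitEquiv h (.inl i) : ℕ) = i := rfl

@[simp] lemma val_finSplitEquiv_inr (h : p ≤ n) (i : Fin p) :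
    (finSplitEquiv h (.inr i) : ℕ) = n - p + i := rfl

@[simp] lemma joinCoords_finSplitEquiv_inl (h : p ≤ n) (w : (Fin (n - p) → ℝ) × (Fin p → ℝ))
    (i : Fin (n - p)) : joinCoords n p w (finSplitEquiv h (.inl i)) = w.1 i := by
  simp [joinCoords]

@[simp] lemma joinCoords_finSplitEquiv_inr (h : p ≤ n) (w : (Fin (n - p) → ℝ) × (Fin p → ℝ))
    (i : Fin p) : joinCoords n p w (finSplitEquiv h (.inr i)) = w.2 i := by
  simp [joinCoords]

lemma measurePreserving_joinCoords (h : p ≤ n) :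
    MeasurePreserving (joinCoords n p) (volume.prod volume) volume := by
  have hjoin : joinCoords n p = MeasurableEquiv.piCongrLeft (fun _ => ℝ) (finSplitEquiv h) ∘
      (MeasurableEquiv.sumPiEquivProdPi fun _ : Fin (n - p) ⊕ Fin p => ℝ).symm := by
    funext w j
    obtain ⟨a, rfl⟩ := (finSplitEquiv h).surjective j
    rw [Function.comp_apply, MeasurableEquiv.piCongrLeft, MeasurableEquiv.coe_mk,
      Equiv.piCongrLeft_apply_apply]
    rcases a with i | i <;> simp [MeasurableEquiv.sumPiEquivProdPi]
  rw [hjoin]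
  exact (volume_measurePreserving_piCongrLeft _ _).comp
    (volume_measurePreserving_sumPiEquivProdPi_symm _)

lemma Qform_joinCoords (h : p < n) (y : Fin (n - p) → ℝ) (z : Fin p → ℝ) :
    Qform (joinCoords n p (y, z)) = Qform y - ∑ i, z i ^ 2 := by
  have hz : ∀ i : Fin p, n - p + (i : ℕ) ≠ 0 := fun i => by omega
  rw [Qform, ← (finSplitEquiv h.le).sum_comp, Fintype.sum_sum_type, sub_eq_add_neg,
    ← Finset.sum_neg_distrib]
  congr 1
  · simp only [val_finSplitEquiv_inl, joinCoords_finSplitEquiv_inl]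
    rfl
  · simp only [val_finSplitEquiv_inr, joinCoords_finSplitEquiv_inr, hz, if_false, neg_one_mul]

lemma joinCoords_mem_coneΩ_iff (h : p < n) {y : Fin (n - p) → ℝ} {z : Fin p → ℝ} :
    joinCoords n p (y, z) ∈ coneΩ n ↔ y ∈ coneΩ (n - p) ∧ ∑ i, z i ^ 2 < Qform y := by
  have hm : 0 < n - p := Nat.sub_pos_of_lt h
  have hz : 0 ≤ ∑ i, z i ^ 2 := Finset.sum_nonneg fun i _ => sq_nonneg (z i)
  rw [mem_coneΩ_iff (hm.trans_le (Nat.sub_le n p)), mem_coneΩ_iff hm, Qform_joinCoords h]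
  simp only [joinCoords, hm, dif_pos]
  constructor
  · rintro ⟨hQ, h0⟩; exact ⟨⟨by linarith, h0⟩, by linarith⟩
  · rintro ⟨⟨hQ, h0⟩, hzQ⟩; exact ⟨by linarith, h0⟩

lemma setLIntegral_coneΩ_eq_iterated (h : p < n) {G : (Fin n → ℝ) → ℝ≥0∞} (hG : Measurable G) :
    ∫⁻ x in coneΩ n, G x = ∫⁻ y in coneΩ (n - p),
      ∫⁻ z in {z | ∑ i, z i ^ 2 < Qform y}, G (joinCoords n p (y, z)) := by
  have hjoin := measurePreserving_joinCoords h.le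
  have hGΩ := hG.indicator (isOpen_coneΩ n).measurableSet
  rw [← lintegral_indicator (isOpen_coneΩ n).measurableSet, ← hjoin.lintegral_comp hGΩ,
    lintegral_prod (fun w => (coneΩ n).indicator G (joinCoords n p w))
      (hGΩ.comp hjoin.measurable).aemeasurable,
    ← lintegral_indicator (isOpen_coneΩ _).measurableSet]
  refine lintegral_congr fun y => ?_
  by_cases hy : y ∈ coneΩ (n - p)
  · rw [Set.indicator_of_mem hy,
      ← lintegral_indicator (measurableSet_lt (by fun_prop) measurable_const)]
    refine lintegral_congr fun z => ?_
    classical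
    simp only [Set.indicator_apply, joinCoords_mem_coneΩ_iff h, hy, true_and, Set.mem_ofPred_eq]
  · simp [joinCoords_mem_coneΩ_iff h, hy]

lemma iotaL_eq_joinCoords (y : Fin (n - p) → ℝ) (v : Fin p → ℝ) :
    iotaL n p y v = joinCoords n p (y, -√(Qform y) • v) := rfl

lemma Qform_iotaL (h : p < n) {y : Fin (n - p) → ℝ} (hy : 0 ≤ Qform y) (v : Fin p → ℝ) :
    Qform (iotaL n p y v) = Qform y * (1 - ∑ i, v i ^ 2) := by
  simp only [iotaL_eq_joinCoords, Qform_joinCoords h, Pi.smul_apply, smul_eq_mul, mul_pow,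
    neg_sq, Real.sq_sqrt hy, ← Finset.mul_sum]
  ring

lemma setLIntegral_sumSq_lt_eq_setLIntegral_ballB {y : Fin (n - p) → ℝ} (hy : 0 < Qform y)
    (g : (Fin n → ℝ) → ℝ≥0∞) :
    ∫⁻ z in {z | ∑ i, z i ^ 2 < Qform y}, g (joinCoords n p (y, z)) =
      ENNReal.ofReal (Qform y ^ ((p : ℝ) / 2)) * ∫⁻ v in ballB p, g (iotaL n p y v) := by
  have hc : -√(Qform y) ≠ 0 := neg_ne_zero.2 (Real.sqrt_pos.2 hy).ne'
  rw [show Qform y = (-√(Qform y)) ^ 2 by rw [neg_sq, Real.sq_sqrt hy.le], ← smul_ballB hc,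
    Measure.setLIntegral_smul_set volume _ hc, Module.finrank_fin_fun, neg_sq, Real.sq_sqrt hy.le]
  congr 2
  rw [abs_pow, abs_neg, abs_of_nonneg (Real.sqrt_nonneg _), Real.sqrt_eq_rpow,
    ← Real.rpow_mul_natCast hy.le]
  ring_nf

end joinCoords

theorem stmt5_general (n p : ℕ) (hn : 3 ≤ n) (hpn : p ≤ n - 2) (lam : ℝ)
    (f : (Fin n → ℝ) → ℝ≥0∞) (hf : Measurable f) :
    ∫⁻ x in coneΩ n, f x * ENNReal.ofReal (Qform x ^ (lam - (n : ℝ) / 2)) ∂volume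
      = ∫⁻ y in coneΩ (n - p), ∫⁻ v in ballB p,
          f (iotaL n p y v) *
            ENNReal.ofReal (Qform y ^ (lam - ((n : ℝ) - (p : ℝ)) / 2)) *
            ENNReal.ofReal ((1 - ∑ i, v i ^ 2) ^ (lam - (n : ℝ) / 2))
          ∂volume ∂volume := by
  have hp : p < n := by omega
  set G : (Fin n → ℝ) → ℝ≥0∞ := fun x => f x * ENNReal.ofReal (Qform x ^ (lam - (n : ℝ) / 2))
  have hG : Measurable G := hf.mul (continuous_Qform.measurable.pow_const _).ennreal_ofReal
  change ∫⁻ x in coneΩ n, G x = _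
  rw [setLIntegral_coneΩ_eq_iterated hp hG]
  refine setLIntegral_congr_fun (isOpen_coneΩ _).measurableSet fun y ⟨hQ, _⟩ => ?_
  rw [setLIntegral_sumSq_lt_eq_setLIntegral_ballB hQ G,
    ← lintegral_const_mul' _ _ ENNReal.ofReal_ne_top]
  refine setLIntegral_congr_fun (measurableSet_ballB p) fun v hv => ?_
  have ht : 0 ≤ 1 - ∑ i, v i ^ 2 := sub_nonneg.2 (le_of_lt hv)
  have hpow : Qform y ^ ((p : ℝ) / 2) * (Qform y * (1 - ∑ i, v i ^ 2)) ^ (lam - (n : ℝ) / 2) =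
      Qform y ^ (lam - ((n : ℝ) - (p : ℝ)) / 2) * (1 - ∑ i, v i ^ 2) ^ (lam - (n : ℝ) / 2) := by
    rw [Real.mul_rpow hQ.le ht, ← mul_assoc, ← Real.rpow_add hQ]
    ring_nf
  simp only [G, Qform_iotaL hp hQ.le, mul_left_comm (ENNReal.ofReal _) (f _), mul_assoc,
    ← ENNReal.ofReal_mul (Real.rpow_nonneg hQ.le _), hpow]

/-- Change of variables for the stratification of the Lorentz cone. -/
theorem stmt5 (n p : ℕ) (hn : 3 ≤ n) (hp : 1 ≤ p) (hpn : p ≤ n - 2) (lam : ℝ)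
    (f : (Fin n → ℝ) → ℝ≥0∞) (hf : Measurable f) :
    ∫⁻ x in coneΩ n, f x * ENNReal.ofReal (Qform x ^ (lam - (n : ℝ) / 2)) ∂volume
      = ∫⁻ y in coneΩ (n - p), ∫⁻ v in ballB p,
          f (iotaL n p y v) *
            ENNReal.ofReal (Qform y ^ (lam - ((n : ℝ) - (p : ℝ)) / 2)) *
            ENNReal.ofReal ((1 - ∑ i, v i ^ 2) ^ (lam - (n : ℝ) / 2))
          ∂volume ∂volume :=
  stmt5_general n p hn hpn lam f hf
end
end

section
/- Let n ≥ 3, 1 ≤ p ≤ n−2, and λ ∈ ℝ with λ > (n−2)/2. Then ∫_{Ω_n} e^{−2x₁}·Q_{1,n−1}(x)^{λ−n/2} dx = ( ∫_{B^p} (1−‖v‖²)^{λ−n/2} dv ) · ( ∫_{Ω_{n−p}} e^{−2y₁}·Q_{1,n−p−1}(y)^{λ−(n−p)/2} dy ), all integrals with respect to Lebesgue measure, and all three integrals are finite. -/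
open MeasureTheory Finset
open scoped ENNReal

noncomputable section

/-!
Write `x = (y, z) ∈ ℝ^r × ℝ^q`. Then `Q(x) = Q(y) - ‖z‖²` and the weight `e^{-2x₁}` depends on `y`
only. For fixed `y`, the substitution `z = √c • v` with `c = Q(y)` gives
`∫ (c - ‖z‖²)₊^μ dz = c₊^(μ + q/2) · ∫_{B^q} (1 - ‖v‖²)^μ dv`, so the cone integral in dimension
`r + q` is the cone integral in dimension `r`, with exponent raised by `q/2`, times the ball
integral. Powers are truncated to positive bases (`posRpow`), so that every integral runs over the
whole space and the cone and the ball are encoded in the integrand.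

The same splitting factors ball integrals, so finiteness reduces to dimension one: the Gamma
integral `∫₀^∞ t^{2ν} e^{-2t} dt` and the Beta-type integral `∫_{-1}^1 (1 - t²)^a dt`.
-/

def posRpow (c μ : ℝ) : ℝ≥0∞ :=
  if 0 < c then ENNReal.ofReal (c ^ μ) else 0

lemma posRpow_of_nonpos {c : ℝ} (hc : c ≤ 0) (μ : ℝ) : posRpow c μ = 0 := by
  simp [posRpow, not_lt.2 hc]

lemma posRpow_of_pos {c : ℝ} (hc : 0 < c) (μ : ℝ) :
    posRpow c μ = ENNReal.ofReal (c ^ μ) := by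
  simp [posRpow, hc]

lemma posRpow_mul_of_pos_left {c : ℝ} (hc : 0 < c) (d μ : ℝ) :
    posRpow (c * d) μ = ENNReal.ofReal (c ^ μ) * posRpow d μ := by
  rcases lt_or_ge 0 d with hd | hd
  · rw [posRpow_of_pos (mul_pos hc hd), posRpow_of_pos hd, Real.mul_rpow hc.le hd.le,
      ENNReal.ofReal_mul (Real.rpow_nonneg hc.le μ)]
  · rw [posRpow_of_nonpos (mul_nonpos_of_nonneg_of_nonpos hc.le hd), posRpow_of_nonpos hd,
      mul_zero]

@[fun_prop]
lemma Measurable.posRpow {α : Type*} [MeasurableSpace α] {f : α → ℝ} (hf : Measurable f)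
    (μ : ℝ) : Measurable fun x => posRpow (f x) μ :=
  Measurable.ite (measurableSet_lt measurable_const hf)
    (ENNReal.measurable_ofReal.comp (hf.pow_const μ)) measurable_const

@[fun_prop]
lemma measurable_Qform {m : ℕ} : Measurable (Qform (m := m)) := by
  unfold Qform
  fun_prop

lemma lintegral_comp_smul {E : Type*} [NormedAddCommGroup E] [NormedSpace ℝ E]
    [MeasurableSpace E] [BorelSpace E] [FiniteDimensional ℝ E] (μ : Measure E)
    [μ.IsAddHaarMeasure] (f : E → ℝ≥0∞) {r : ℝ} (hr : r ≠ 0) :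
    ∫⁻ x, f (r • x) ∂μ
      = ENNReal.ofReal |(r ^ Module.finrank ℝ E)⁻¹| * ∫⁻ x, f x ∂μ := by
  rw [← smul_eq_mul, ← lintegral_smul_measure, ← Measure.map_addHaar_smul μ hr,
    ← MeasurableEquiv.coe_smul₀ hr, lintegral_map_equiv]
  rfl

def ballIntegral (q : ℕ) (μ : ℝ) : ℝ≥0∞ :=
  ∫⁻ v : Fin q → ℝ, posRpow (1 - ∑ i, v i ^ 2) μ

lemma lintegral_posRpow_sub_sum_sq (q : ℕ) (c μ : ℝ) :
    ∫⁻ z : Fin q → ℝ, posRpow (c - ∑ i, z i ^ 2) μ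
      = posRpow c (μ + q / 2) * ballIntegral q μ := by
  rcases le_or_gt c 0 with hc | hc
  · have hzero (z : Fin q → ℝ) : posRpow (c - ∑ i, z i ^ 2) μ = 0 :=
      posRpow_of_nonpos (by linarith [sum_nonneg fun i (_ : i ∈ univ) => sq_nonneg (z i)]) μ
    simp [hzero, posRpow_of_nonpos hc]
  have hscaled (v : Fin q → ℝ) : posRpow (c - ∑ i, (√c • v) i ^ 2) μ
      = ENNReal.ofReal (c ^ μ) * posRpow (1 - ∑ i, v i ^ 2) μ := by
    have : c - ∑ i, (√c • v) i ^ 2 = c * (1 - ∑ i, v i ^ 2) := by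
      simp only [Pi.smul_apply, smul_eq_mul, mul_pow, ← mul_sum, Real.sq_sqrt hc.le]
      ring
    rw [this, posRpow_mul_of_pos_left hc]
  have hsq : √c ^ q = c ^ ((q : ℝ) / 2) := by
    rw [Real.sqrt_eq_rpow, ← Real.rpow_natCast, ← Real.rpow_mul hc.le]
    ring_nf
  have hpow : 0 < c ^ ((q : ℝ) / 2) := by positivity
  have key := lintegral_comp_smul volume (fun z : Fin q → ℝ => posRpow (c - ∑ i, z i ^ 2) μ)
    (Real.sqrt_pos.2 hc).ne'
  rw [Module.finrank_fin_fun, hsq, abs_of_pos (inv_pos.2 hpow)] at key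
  simp only [hscaled, lintegral_const_mul' _ _ ENNReal.ofReal_ne_top] at key
  calc ∫⁻ z : Fin q → ℝ, posRpow (c - ∑ i, z i ^ 2) μ
      = ENNReal.ofReal (c ^ ((q : ℝ) / 2)) * (ENNReal.ofReal (c ^ ((q : ℝ) / 2))⁻¹ *
          ∫⁻ z : Fin q → ℝ, posRpow (c - ∑ i, z i ^ 2) μ) := by
        rw [← mul_assoc, ← ENNReal.ofReal_mul hpow.le, mul_inv_cancel₀ hpow.ne',
          ENNReal.ofReal_one, one_mul]
    _ = ENNReal.ofReal (c ^ ((q : ℝ) / 2)) * (ENNReal.ofReal (c ^ μ) * ballIntegral q μ) := by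
        rw [← key, ballIntegral]
    _ = posRpow c (μ + q / 2) * ballIntegral q μ := by
        rw [posRpow_of_pos hc, Real.rpow_add hc, ENNReal.ofReal_mul (by positivity)]
        ring

def finAppendMeasurableEquiv (α : Type*) [MeasurableSpace α] (r q : ℕ) :
    (Fin r → α) × (Fin q → α) ≃ᵐ (Fin (r + q) → α) :=
  (MeasurableEquiv.sumPiEquivProdPi fun _ : Fin r ⊕ Fin q => α).symm.trans
    (MeasurableEquiv.piCongrLeft (fun _ => α) finSumFinEquiv)

lemma finAppendMeasurableEquiv_apply {α : Type*} [MeasurableSpace α] {r q : ℕ}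
    (y : Fin r → α) (z : Fin q → α) :
    finAppendMeasurableEquiv α r q (y, z) = Fin.append y z := by
  funext i
  refine Fin.addCases (fun l => ?_) (fun l => ?_) i
  · rw [Fin.append_left, ← finSumFinEquiv_apply_left]
    exact Equiv.piCongrLeft_apply_apply (fun _ => α) finSumFinEquiv _ (Sum.inl l)
  · rw [Fin.append_right, ← finSumFinEquiv_apply_right]
    exact Equiv.piCongrLeft_apply_apply (fun _ => α) finSumFinEquiv _ (Sum.inr l)

lemma lintegral_fin_append {α : Type*} [MeasureSpace α] [SigmaFinite (volume : Measure α)]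
    (r q : ℕ) {F : (Fin (r + q) → α) → ℝ≥0∞} (hF : Measurable F) :
    ∫⁻ x, F x = ∫⁻ y : Fin r → α, ∫⁻ z : Fin q → α, F (Fin.append y z) := by
  have hmp : MeasurePreserving (finAppendMeasurableEquiv α r q) volume volume :=
    (volume_measurePreserving_piCongrLeft (fun _ => α) finSumFinEquiv).comp
      (volume_measurePreserving_sumPiEquivProdPi_symm fun _ : Fin r ⊕ Fin q => α)
  rw [← hmp.lintegral_comp hF, Measure.volume_eq_prod,
    lintegral_prod (fun a => F (finAppendMeasurableEquiv α r q a))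
      (hF.comp (finAppendMeasurableEquiv α r q).measurable).aemeasurable]
  simp only [finAppendMeasurableEquiv_apply]

lemma lintegral_lintegral_mul_posRpow_sub_sum_sq {X : Type*} [MeasurableSpace X] (ν : Measure X)
    (q : ℕ) (μ : ℝ) {w : X → ℝ≥0∞} (hw : Measurable w) {c : X → ℝ}
    (hc : Measurable c) :
    ∫⁻ y, (∫⁻ z : Fin q → ℝ, w y * posRpow (c y - ∑ i, z i ^ 2) μ) ∂ν
      = (∫⁻ y, w y * posRpow (c y) (μ + q / 2) ∂ν) * ballIntegral q μ := by
  have hinner (y : X) : ∫⁻ z : Fin q → ℝ, w y * posRpow (c y - ∑ i, z i ^ 2) μ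
      = w y * posRpow (c y) (μ + q / 2) * ballIntegral q μ := by
    rw [lintegral_const_mul _ (by fun_prop), lintegral_posRpow_sub_sum_sq, mul_assoc]
  simp_rw [hinner]
  exact lintegral_mul_const _ (by fun_prop)

lemma Qform_append {r q : ℕ} (hr : 0 < r) (y : Fin r → ℝ) (z : Fin q → ℝ) :
    Qform (Fin.append y z) = Qform y - ∑ i, z i ^ 2 := by
  simp [Qform, Fin.sum_univ_add, hr.ne', sub_eq_add_neg]

lemma sum_sq_append {r q : ℕ} (y : Fin r → ℝ) (z : Fin q → ℝ) :
    ∑ i, Fin.append y z i ^ 2 = ∑ i, y i ^ 2 + ∑ i, z i ^ 2 := by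
  simp [Fin.sum_univ_add]

def coneWeight {m : ℕ} (x : Fin m → ℝ) : ℝ≥0∞ :=
  if h : 0 < m then
    if 0 < x ⟨0, h⟩ then ENNReal.ofReal (Real.exp (-2 * x ⟨0, h⟩)) else 0
  else 0

@[fun_prop]
lemma measurable_coneWeight {m : ℕ} : Measurable (coneWeight (m := m)) := by
  unfold coneWeight
  split
  · exact Measurable.ite (measurableSet_lt measurable_const (measurable_pi_apply _)) (by fun_prop)
      measurable_const
  · exact measurable_const

lemma coneWeight_append {r q : ℕ} (hr : 0 < r) (y : Fin r → ℝ) (z : Fin q → ℝ) :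
    coneWeight (Fin.append y z) = coneWeight y := by
  have h0 : (⟨0, by omega⟩ : Fin (r + q)) = Fin.castAdd q ⟨0, hr⟩ := rfl
  simp only [coneWeight, dif_pos hr, dif_pos (show 0 < r + q by omega), h0, Fin.append_left]

def coneIntegral (m : ℕ) (ν : ℝ) : ℝ≥0∞ :=
  ∫⁻ x : Fin m → ℝ, coneWeight x * posRpow (Qform x) ν

theorem coneIntegral_add {r : ℕ} (hr : 0 < r) (q : ℕ) (ν : ℝ) :
    coneIntegral (r + q) ν = coneIntegral r (ν + q / 2) * ballIntegral q ν := by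
  rw [coneIntegral, lintegral_fin_append r q (by fun_prop)]
  simp only [coneWeight_append hr, Qform_append hr]
  exact lintegral_lintegral_mul_posRpow_sub_sum_sq volume q ν measurable_coneWeight
    measurable_Qform

theorem ballIntegral_add (r q : ℕ) (μ : ℝ) :
    ballIntegral (r + q) μ = ballIntegral r (μ + q / 2) * ballIntegral q μ := by
  have h := lintegral_lintegral_mul_posRpow_sub_sum_sq volume q μ (measurable_const (a := 1))
    (c := fun y : Fin r → ℝ => 1 - ∑ i, y i ^ 2) (by fun_prop)
  simp only [one_mul] at h
  rw [ballIntegral, lintegral_fin_append r q (by fun_prop), ballIntegral, ← h]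
  simp only [sum_sq_append, sub_add_eq_sub_sub]

lemma lintegral_fin_one {α : Type*} [MeasureSpace α] (F : (Fin 1 → α) → ℝ≥0∞) :
    ∫⁻ x, F x = ∫⁻ t, F fun _ => t :=
  (((volume_preserving_funUnique (Fin 1) α).symm _).lintegral_comp_emb
    (MeasurableEquiv.measurableEmbedding _) F).symm

lemma coneIntegral_one (ν : ℝ) :
    coneIntegral 1 ν
      = ∫⁻ t in Set.Ioi 0, ENNReal.ofReal (t ^ (2 * ν) * Real.exp (-2 * t)) := by
  rw [coneIntegral, lintegral_fin_one, ← lintegral_indicator measurableSet_Ioi]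
  congr 1
  funext t
  by_cases ht : 0 < t
  · have hsq : (t ^ 2) ^ ν = t ^ (2 * ν) := by
      rw [← Real.rpow_natCast_mul ht.le]; norm_num
    simp [coneWeight, Qform, ht, posRpow_of_pos (pow_pos ht 2), hsq,
      ENNReal.ofReal_mul (Real.rpow_nonneg ht.le _), mul_comm]
  · simp [coneWeight, ht]

lemma coneIntegral_one_lt_top {ν : ℝ} (hν : -1 / 2 < ν) : coneIntegral 1 ν < ⊤ := by
  have h := integrableOn_rpow_mul_exp_neg_mul_rpow (s := 2 * ν) (p := 1) (b := 2) (by linarith)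
    one_pos two_pos
  simp only [Real.rpow_one] at h
  rw [coneIntegral_one]
  exact h.lintegral_lt_top

/-- `1 - t²` lies between `1 - t` and `1 + t`, so for either sign of `a` its `a`-th power is
bounded by one of theirs. -/
lemma rpow_one_sub_sq_le {t : ℝ} (ht : t ^ 2 < 1) (a : ℝ) :
    (1 - t ^ 2) ^ a ≤ (1 - t) ^ a + (1 + t) ^ a := by
  have h₁ : 0 < 1 - t := by nlinarith
  have h₂ : 0 < 1 + t := by nlinarith
  have := Real.rpow_nonneg h₁.le a
  have := Real.rpow_nonneg h₂.le a
  rcases le_total 0 a with ha | ha <;> rcases le_total 0 t with ht | ht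
  · have := Real.rpow_le_rpow (by nlinarith) (show 1 - t ^ 2 ≤ 1 + t by nlinarith) ha; linarith
  · have := Real.rpow_le_rpow (by nlinarith) (show 1 - t ^ 2 ≤ 1 - t by nlinarith) ha; linarith
  · have := Real.rpow_le_rpow_of_nonpos h₁ (show 1 - t ≤ 1 - t ^ 2 by nlinarith) ha; linarith
  · have := Real.rpow_le_rpow_of_nonpos h₂ (show 1 + t ≤ 1 - t ^ 2 by nlinarith) ha; linarith

lemma ballIntegral_one_lt_top {a : ℝ} (ha : -1 < a) : ballIntegral 1 a < ⊤ := by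
  set g : ℝ → ℝ≥0∞ := (Set.Ioc 0 2).indicator fun s => ENNReal.ofReal (s ^ a)
  have hg : Measurable g := Measurable.indicator (by fun_prop) measurableSet_Ioc
  have hbound (t : ℝ) : posRpow (1 - t ^ 2) a ≤ g (1 - t) + g (1 + t) := by
    rcases le_or_gt (1 - t ^ 2) 0 with h | h
    · simp [posRpow_of_nonpos h]
    have h₁ : 1 - t ∈ Set.Ioc (0 : ℝ) 2 := ⟨by nlinarith, by nlinarith⟩
    have h₂ : 1 + t ∈ Set.Ioc (0 : ℝ) 2 := ⟨by nlinarith, by nlinarith⟩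
    simp only [g, Set.indicator_of_mem h₁, Set.indicator_of_mem h₂]
    rw [posRpow_of_pos h, ← ENNReal.ofReal_add (Real.rpow_nonneg h₁.1.le a)
      (Real.rpow_nonneg h₂.1.le a)]
    exact ENNReal.ofReal_le_ofReal (rpow_one_sub_sq_le (by linarith) a)
  have hg_fin : ∫⁻ s, g s < ⊤ := by
    rw [lintegral_indicator measurableSet_Ioc]
    exact (intervalIntegral.intervalIntegrable_rpow' ha).1.lintegral_lt_top
  calc ballIntegral 1 a = ∫⁻ t : ℝ, posRpow (1 - t ^ 2) a := by
        simp [ballIntegral, lintegral_fin_one]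
    _ ≤ ∫⁻ t, (g (1 - t) + g (1 + t)) := lintegral_mono hbound
    _ = (∫⁻ s, g s) + ∫⁻ s, g s := by
        rw [lintegral_add_left (by fun_prop),
          (Measure.measurePreserving_sub_left volume 1).lintegral_comp hg,
          (measurePreserving_add_left volume 1).lintegral_comp hg]
    _ < ⊤ := ENNReal.add_lt_top.2 ⟨hg_fin, hg_fin⟩

theorem ballIntegral_lt_top (q : ℕ) {μ : ℝ} (hμ : -1 < μ) : ballIntegral q μ < ⊤ := by
  induction q with
  | zero =>
    have hvol : (volume : Measure (Fin 0 → ℝ)) Set.univ = 1 := by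
      rw [← Set.pi_univ, volume_pi_pi]
      simp
    simp [ballIntegral, posRpow, hvol]
  | succ q ih =>
    rw [add_comm, ballIntegral_add]
    have hq : (0 : ℝ) ≤ q / 2 := by positivity
    exact ENNReal.mul_lt_top (ballIntegral_one_lt_top (by linarith)) ih

theorem coneIntegral_lt_top {m : ℕ} (hm : 2 ≤ m) {ν : ℝ} (hν : -1 < ν) :
    coneIntegral m ν < ⊤ := by
  obtain ⟨q, rfl⟩ : ∃ q, m = 1 + q := ⟨m - 1, by omega⟩
  have hq : (1 : ℝ) ≤ q := by exact_mod_cast (show 1 ≤ q by omega)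
  rw [coneIntegral_add one_pos]
  exact ENNReal.mul_lt_top (coneIntegral_one_lt_top (by linarith)) (ballIntegral_lt_top q hν)

lemma setLIntegral_coneΩ {m : ℕ} (hm : 0 < m) (ν : ℝ) :
    ∫⁻ x in coneΩ m, ENNReal.ofReal (Real.exp (-2 * x ⟨0, hm⟩) * Qform x ^ ν)
      = coneIntegral m ν := by
  have hΩ : MeasurableSet (coneΩ m) := by
    unfold coneΩ
    measurability
  rw [coneIntegral, ← lintegral_indicator hΩ]
  congr 1
  funext x
  by_cases hx : x ∈ coneΩ m
  · rw [Set.indicator_of_mem hx]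
    obtain ⟨hQ, hpos⟩ := hx
    rw [coneWeight, dif_pos hm, if_pos (hpos _ rfl),
      posRpow_of_pos hQ, ← ENNReal.ofReal_mul (Real.exp_nonneg _)]
  · rw [Set.indicator_of_notMem hx]
    simp only [coneΩ, Set.mem_ofPred_eq, not_and_or, not_lt, not_forall] at hx
    rcases hx with hQ | ⟨i, hi, hxi⟩
    · rw [posRpow_of_nonpos hQ, mul_zero]
    · obtain rfl : i = ⟨0, hm⟩ := Fin.ext hi
      rw [coneWeight, dif_pos hm, if_neg (not_lt.2 hxi), zero_mul]

lemma setLIntegral_ballB (q : ℕ) (μ : ℝ) :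
    ∫⁻ v in ballB q, ENNReal.ofReal ((1 - ∑ i, v i ^ 2) ^ μ) = ballIntegral q μ := by
  have hB : MeasurableSet (ballB q) := measurableSet_lt (by fun_prop) measurable_const
  rw [ballIntegral, ← lintegral_indicator hB]
  congr 1
  funext v
  by_cases hv : v ∈ ballB q
  · rw [Set.indicator_of_mem hv, posRpow_of_pos (sub_pos.2 hv)]
  · rw [Set.indicator_of_notMem hv, posRpow_of_nonpos (sub_nonpos.2 (not_lt.1 hv))]

/-- Factorization of the Gindikin Gamma integral of the Lorentz cone through
the stratification. -/
theorem stmt12 (n p : ℕ) (hn : 3 ≤ n) (hpn : p ≤ n - 2) (lam : ℝ)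
    (hlam : ((n : ℝ) - 2) / 2 < lam) :
    (∫⁻ x in coneΩ n,
        ENNReal.ofReal (Real.exp (-2 * x ⟨0, by omega⟩) * Qform x ^ (lam - (n : ℝ) / 2))
        ∂volume
      = (∫⁻ v in ballB p,
            ENNReal.ofReal ((1 - ∑ i, v i ^ 2) ^ (lam - (n : ℝ) / 2)) ∂volume) *
          ∫⁻ y in coneΩ (n - p),
            ENNReal.ofReal (Real.exp (-2 * y ⟨0, by omega⟩) *
              Qform y ^ (lam - ((n : ℝ) - (p : ℝ)) / 2)) ∂volume) ∧
    (∫⁻ x in coneΩ n,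
        ENNReal.ofReal (Real.exp (-2 * x ⟨0, by omega⟩) * Qform x ^ (lam - (n : ℝ) / 2))
        ∂volume) < ⊤ ∧
    (∫⁻ v in ballB p,
        ENNReal.ofReal ((1 - ∑ i, v i ^ 2) ^ (lam - (n : ℝ) / 2)) ∂volume) < ⊤ ∧
    (∫⁻ y in coneΩ (n - p),
        ENNReal.ofReal (Real.exp (-2 * y ⟨0, by omega⟩) *
          Qform y ^ (lam - ((n : ℝ) - (p : ℝ)) / 2)) ∂volume) < ⊤ := by
  obtain ⟨r, hr, rfl⟩ : ∃ r, 2 ≤ r ∧ n = r + p := ⟨n - p, by omega, by omega⟩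
  rw [setLIntegral_coneΩ, setLIntegral_coneΩ, setLIntegral_ballB, Nat.add_sub_cancel,
    coneIntegral_add (by omega)]
  push_cast at hlam ⊢
  have hp : (0 : ℝ) ≤ p := p.cast_nonneg
  have hcone := coneIntegral_lt_top hr (ν := lam - (r + p - p) / 2) (by linarith)
  have hball := ballIntegral_lt_top p (μ := lam - (r + p) / 2) (by linarith)
  rw [show lam - (r + p) / 2 + p / 2 = lam - (r + p - p) / 2 by ring]
  exact ⟨mul_comm _ _, ENNReal.mul_lt_top hcone hball, hball, hcone⟩
end
end
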